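/- arXiv:2604.20786 — 4 statements merged into one kernel-verified Lean document; each statement's English description precedes it below -/
import Mathlib

section
/- Let H be a graph of maximum degree Δ ≥ 3, v a vertex of H, and S a set of c vertices with v ∉ S and c ≥ Δ(Δ−1). Then ∑_{w∈S} dist_H(v,w) ≥ c·(log₂ c / log₂(Δ−1) − 4). -/
private lemma aux_adj_closer {V : Type*} (H : SimpleGraph V) (hconn : H.Connected)
    (v u : V) (k : ℕ) (h : H.dist v u = k + 1) :
    ∃ x, H.Adj u x ∧ H.dist v x = k := by
  obtain ⟨p, hp⟩ := hconn.exists_walk_length_eq_dist u v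
  rw [SimpleGraph.dist_comm, h] at hp
  cases p with
  | nil => simp at hp
  | @cons _ x _ hadj q =>
    simp [SimpleGraph.Walk.length_cons] at hp
    refine ⟨x, hadj, le_antisymm ?_ ?_⟩
    · have h1 := SimpleGraph.dist_le q
      rw [SimpleGraph.dist_comm]
      omega
    · have h1 : H.dist v u ≤ H.dist v x + H.dist x u := hconn.dist_triangle
      have h2 : H.dist x u ≤ 1 := by
        simpa using SimpleGraph.dist_le (SimpleGraph.Walk.cons hadj.symm SimpleGraph.Walk.nil)
      omega

open Finset in
private lemma aux_ball {V : Type*} [Fintype V] (H : SimpleGraph V) (hconn : H.Connected)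
    (Δ : ℕ) (hΔ : 3 ≤ Δ) (hdeg : ∀ v : V, (H.neighborSet v).ncard ≤ Δ)
    (v : V) (r : ℕ) :
    (Finset.univ.filter (fun w => H.dist v w ≤ r)).card ≤ (Δ - 1) ^ (r + 2) := by
  classical
  set D := Δ - 1 with hDdef
  have hD : 2 ≤ D := by omega
  have hdegF : ∀ u : V, (univ.filter (fun x => H.Adj u x)).card ≤ Δ := by
    intro u
    have h := hdeg u
    rwa [SimpleGraph.neighborSet, Set.ncard_eq_toFinset_card', Set.toFinset_setOf] at h
  have hsphere : ∀ k : ℕ, (univ.filter (fun w => H.dist v w = k + 1)).card ≤ Δ * D ^ k := by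
    intro k
    induction k with
    | zero =>
      simp only [pow_zero, mul_one]
      refine le_trans (card_le_card ?_) (hdegF v)
      intro w hw
      simp only [mem_filter, mem_univ, true_and] at hw ⊢
      exact (SimpleGraph.dist_eq_one_iff_adj).mp hw
    | succ k ih =>
      have hsub : (univ.filter (fun w => H.dist v w = k + 1 + 1)) ⊆
          (univ.filter (fun w => H.dist v w = k + 1)).biUnion
            (fun u => (univ.filter (fun x => H.Adj u x)).filter
              (fun w => H.dist v w = k + 1 + 1)) := by
        intro w hw
        simp only [mem_filter, mem_univ, true_and] at hw
        obtain ⟨x, hx, hdx⟩ := aux_adj_closer H hconn v w (k+1) hw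
        refine mem_biUnion.mpr ⟨x, ?_, ?_⟩ <;> simp [hdx, hx.symm, hw]
      refine le_trans (card_le_card hsub) (le_trans card_biUnion_le ?_)
      have hbound : ∀ u ∈ univ.filter (fun w => H.dist v w = k + 1),
          ((univ.filter (fun x => H.Adj u x)).filter
            (fun w => H.dist v w = k + 1 + 1)).card ≤ D := by
        intro u hu
        simp only [mem_filter, mem_univ, true_and] at hu
        obtain ⟨x, hx, hdx⟩ := aux_adj_closer H hconn v u k hu
        have hxmem : x ∈ univ.filter (fun y => H.Adj u y) := by simp [hx]
        have hsub2 : (univ.filter (fun y => H.Adj u y)).filter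
            (fun w => H.dist v w = k + 1 + 1)
            ⊆ (univ.filter (fun y => H.Adj u y)).erase x := by
          intro w hw
          simp only [mem_filter, mem_univ, true_and] at hw
          refine mem_erase.mpr ⟨?_, by simp [hw.1]⟩
          rintro rfl
          omega
        refine le_trans (card_le_card hsub2) ?_
        rw [card_erase_of_mem hxmem]
        have := hdegF u
        omega
      refine le_trans (Finset.sum_le_sum hbound) ?_
      rw [Finset.sum_const, smul_eq_mul]
      calc (univ.filter (fun w => H.dist v w = k+1)).card * D
          ≤ (Δ * D^k) * D := Nat.mul_le_mul_right _ ih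
        _ = Δ * D^(k+1) := by ring
  induction r with
  | zero =>
    have hsub : (univ.filter (fun w => H.dist v w ≤ 0)) ⊆ {v} := by
      intro w hw
      simp only [mem_filter, mem_univ, true_and, Nat.le_zero] at hw
      have := (hconn.dist_eq_zero_iff).mp hw
      simp [← this]
    refine le_trans (card_le_card hsub) ?_
    simpa using Nat.one_le_pow _ _ (by omega)
  | succ r ih =>
    have hsub : (univ.filter (fun w => H.dist v w ≤ r + 1)) ⊆
        (univ.filter (fun w => H.dist v w ≤ r)) ∪
          (univ.filter (fun w => H.dist v w = r + 1)) := by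
      intro w hw
      simp only [mem_filter, mem_union, mem_univ, true_and] at hw ⊢
      omega
    refine le_trans (card_le_card hsub) (le_trans (card_union_le _ _) ?_)
    have h1 := hsphere r
    have h2 : D ^ (r + 2) + Δ * D ^ r ≤ D ^ (r + 1 + 2) := by
      have hΔD : Δ = D + 1 := by omega
      calc D^(r+2) + Δ*D^r = (D^2 + Δ) * D^r := by ring
        _ ≤ D^3 * D^r := Nat.mul_le_mul_right _ (by nlinarith)
        _ = D^(r+1+2) := by ring
    omega



/- Lemma 1, equation (2): in a connected graph H of maximum degree Δ ≥ 3, for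
any vertex v and set S of c ≥ Δ(Δ−1) vertices with v ∉ S,
∑_{w∈S} dist_H(v,w) ≥ c·(log₂ c / log₂(Δ−1) − 4). -/
theorem stmt_6 {V : Type*} [Fintype V] (H : SimpleGraph V) (hconn : H.Connected)
    (Δ : ℕ) (hΔ : 3 ≤ Δ) (hdeg : ∀ v : V, (H.neighborSet v).ncard ≤ Δ)
    (v : V) (S : Finset V) (hvS : v ∉ S) (c : ℕ) (hc : S.card = c)
    (hcΔ : Δ * (Δ - 1) ≤ c) :
    (c : ℝ) * (Real.logb 2 c / Real.logb 2 ((Δ : ℝ) - 1) - 4)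
      ≤ ∑ w ∈ S, (H.dist v w : ℝ) := by
  classical
  set D := Δ - 1 with hDdef
  have hD2 : 2 ≤ D := by omega
  have hc6 : 6 ≤ c := by
    have h32 : 3 * 2 ≤ Δ * D := Nat.mul_le_mul hΔ hD2
    omega
  set L := Nat.log D c with hLdef
  have hL2 : 2 ≤ L := by
    have hD2c : D ^ 2 ≤ c := by
      refine le_trans ?_ hcΔ
      calc D ^ 2 = D * D := pow_two D
        _ ≤ Δ * D := Nat.mul_le_mul_right _ (by omega)
    exact (Nat.le_log_iff_pow_le (by omega) (by omega)).mpr hD2c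
  have hcu : c < D ^ (L + 1) := Nat.lt_pow_succ_log_self (by omega) c
  -- layer-cake lower bound
  have key1 : ∑ r ∈ Finset.range (L - 1), (S.filter (fun w => r < H.dist v w)).card
      ≤ ∑ w ∈ S, H.dist v w := by
    have hterm : ∀ w ∈ S, ((Finset.range (L-1)).filter (fun r => r < H.dist v w)).card
        ≤ H.dist v w := by
      intro w _
      calc ((Finset.range (L-1)).filter (fun r => r < H.dist v w)).card
          ≤ (Finset.range (H.dist v w)).card := by
            refine Finset.card_le_card (fun r hr => ?_)
            simp only [Finset.mem_filter, Finset.mem_range] at hr ⊢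
            exact hr.2
        _ = H.dist v w := Finset.card_range _
    calc ∑ r ∈ Finset.range (L-1), (S.filter (fun w => r < H.dist v w)).card
        = ∑ r ∈ Finset.range (L-1), ∑ w ∈ S, if r < H.dist v w then 1 else 0 := by
          exact Finset.sum_congr rfl fun r _ => Finset.card_filter _ _
      _ = ∑ w ∈ S, ∑ r ∈ Finset.range (L-1), if r < H.dist v w then 1 else 0 :=
          Finset.sum_comm
      _ = ∑ w ∈ S, ((Finset.range (L-1)).filter (fun r => r < H.dist v w)).card :=
          Finset.sum_congr rfl fun w _ => (Finset.card_filter _ _).symm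
      _ ≤ ∑ w ∈ S, H.dist v w := Finset.sum_le_sum hterm
  have key2 : ∀ r : ℕ, c ≤ (S.filter (fun w => r < H.dist v w)).card + D ^ (r+2) := by
    intro r
    have hsplit := Finset.card_filter_add_card_filter_not
      (s := S) (p := fun w => r < H.dist v w)
    have hsub : S.filter (fun w => ¬ r < H.dist v w)
        ⊆ Finset.univ.filter (fun w => H.dist v w ≤ r) := by
      intro w hw
      simp only [Finset.mem_filter, Finset.mem_univ, true_and, not_lt] at hw ⊢
      exact hw.2
    have h1 := Finset.card_le_card hsub
    have hb : (Finset.univ.filter (fun w => H.dist v w ≤ r)).card ≤ D ^ (r + 2) :=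
      aux_ball H hconn Δ hΔ hdeg v r
    omega
  have key3 : ∀ n : ℕ, ∑ r ∈ Finset.range n, D ^ (r+2) ≤ 2 * D ^ (n+1) := by
    intro n
    induction n with
    | zero => simp
    | succ n ih =>
      rw [Finset.sum_range_succ, show n+1+1 = n+2 from rfl]
      have h1 : 2 * D^(n+1) ≤ D * D^(n+1) := Nat.mul_le_mul_right _ hD2
      have h2 : D * D^(n+1) = D^(n+2) := by ring
      omega
  have keyN : (L - 1) * c ≤ (∑ w ∈ S, H.dist v w) + 2 * c := by
    have h1 : ∑ r ∈ Finset.range (L-1), c = (L-1) * c := by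
      rw [Finset.sum_const, Finset.card_range, smul_eq_mul]
    have h2 : ∑ r ∈ Finset.range (L-1), c
        ≤ ∑ r ∈ Finset.range (L-1), ((S.filter (fun w => r < H.dist v w)).card + D ^ (r+2)) :=
      Finset.sum_le_sum (fun r _ => key2 r)
    rw [Finset.sum_add_distrib] at h2
    have h3 := key3 (L-1)
    have h4 : D ^ (L - 1 + 1) ≤ c := by
      have hE : L - 1 + 1 = L := by omega
      rw [hE]
      exact Nat.pow_log_le_self D (by omega)
    omega
  have hL1 : 1 ≤ L := by omega
  have hreal : (c : ℝ) * ((L : ℝ) - 3) ≤ ∑ w ∈ S, (H.dist v w : ℝ) := by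
    have h := (Nat.cast_le (α := ℝ)).mpr keyN
    push_cast [Nat.cast_sub hL1] at h
    linarith
  have hDcast : ((Δ:ℝ) - 1) = (D:ℝ) := by
    rw [hDdef]
    push_cast [Nat.cast_sub (by omega : 1 ≤ Δ)]
    ring
  have hlogD : 0 < Real.log (D:ℝ) := Real.log_pos (by exact_mod_cast hD2)
  have hratio : Real.logb 2 (c:ℝ) / Real.logb 2 (D:ℝ)
      = Real.log (c:ℝ) / Real.log (D:ℝ) := by
    unfold Real.logb
    rw [div_div_div_comm, div_self (ne_of_gt (Real.log_pos one_lt_two)), div_one]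
  have hmain : Real.logb 2 (c:ℝ) / Real.logb 2 ((Δ:ℝ) - 1) ≤ (L:ℝ) + 1 := by
    rw [hDcast, hratio, div_le_iff₀ hlogD]
    have hle : (c:ℝ) ≤ (D:ℝ)^(L+1) := by exact_mod_cast hcu.le
    calc Real.log (c:ℝ) ≤ Real.log ((D:ℝ)^(L+1)) :=
          Real.log_le_log (by positivity) hle
      _ = ((L:ℝ)+1) * Real.log (D:ℝ) := by
          rw [Real.log_pow]; push_cast; ring
  calc (c : ℝ) * (Real.logb 2 c / Real.logb 2 ((Δ : ℝ) - 1) - 4)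
      ≤ (c : ℝ) * (((L:ℝ) + 1) - 4) := by
        refine mul_le_mul_of_nonneg_left ?_ (by positivity)
        linarith
    _ = (c : ℝ) * ((L:ℝ) - 3) := by ring
    _ ≤ _ := hreal
end

section
/- Let H be a binary tree (maximum degree 3) containing a vertex v and a set S of c ≥ 1 vertices with v ∉ S. Then ∑_{w∈S} dist_H(v,w) ≥ c·h + 3h − 3·(2^h − 1), where h = 1 + ⌊log₂⌈c/3⌉⌋. -/
/- Δ = 3 case of the distance lower bound: if H is a tree of maximum degree 3
(a "binary tree"), v a vertex and S a set of c ≥ 1 vertices with v ∉ S, then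
∑_{w∈S} dist_H(v,w) ≥ c·h + 3h − 3·(2^h − 1), where h = 1 + ⌊log₂⌈c/3⌉⌋. -/

/-- In a connected graph, a vertex at distance `n+1` from `v` has a neighbor at
distance `n` from `v`. -/
lemma pred_exists {V : Type*} {H : SimpleGraph V} (hconn : H.Connected) (v w : V) (n : ℕ)
    (hd : H.dist v w = n + 1) : ∃ u, H.Adj u w ∧ H.dist v u = n := by
  obtain ⟨p, hp⟩ := (hconn.preconnected v w).exists_walk_length_eq_dist
  rw [hd] at hp
  have hq : p.reverse.length = n + 1 := by simp [hp]
  cases hq' : p.reverse with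
  | nil => rw [hq'] at hq; simp at hq
  | cons ha q' =>
    rename_i u
    rw [hq'] at hq
    have hq'len : q'.length = n := by simpa using hq
    refine ⟨u, ha.symm, ?_⟩
    have h1 : H.dist v u ≤ n := by
      have := H.dist_le q'.reverse
      rwa [SimpleGraph.Walk.length_reverse, hq'len] at this
    have h2 : H.dist u w ≤ 1 := by
      rw [SimpleGraph.dist_comm]
      exact le_of_eq (SimpleGraph.dist_eq_one_iff_adj.mpr ha)
    have h3 : H.dist v w ≤ H.dist v u + H.dist u w := hconn.dist_triangle
    omega

/-- Sphere counting: in a connected graph of max degree 3 there are at most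
`3 * 2 ^ i` vertices at distance exactly `i + 1` from `v`. -/
lemma sphere_le {V : Type*} [Fintype V] (H : SimpleGraph V) (hconn : H.Connected)
    (hdeg : ∀ v : V, (H.neighborSet v).ncard ≤ 3) (v : V) :
    ∀ i : ℕ, (Finset.univ.filter fun w => H.dist v w = i + 1).card ≤ 3 * 2 ^ i := by
  classical
  intro i
  induction i with
  | zero =>
    have hsub : (Finset.univ.filter fun w => H.dist v w = 1) ⊆ (H.neighborSet v).toFinset := by
      intro w hw
      simp only [Finset.mem_filter] at hw
      simp only [Set.mem_toFinset, SimpleGraph.mem_neighborSet]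
      exact SimpleGraph.dist_eq_one_iff_adj.mp hw.2
    calc (Finset.univ.filter fun w => H.dist v w = 1).card
        ≤ (H.neighborSet v).toFinset.card := Finset.card_le_card hsub
      _ = (H.neighborSet v).ncard := (Set.ncard_eq_toFinset_card' _).symm
      _ ≤ 3 * 2 ^ 0 := by simpa using hdeg v
  | succ i ih =>
    set s := Finset.univ.filter fun w => H.dist v w = i + 2 with hs
    set t := Finset.univ.filter fun w => H.dist v w = i + 1 with ht
    let f : V → V := fun w =>
      if hw : H.dist v w = (i + 1) + 1 then (pred_exists hconn v w (i + 1) hw).choose else w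
    have hf : ∀ w ∈ s, H.Adj (f w) w ∧ H.dist v (f w) = i + 1 := by
      intro w hw
      simp only [hs, Finset.mem_filter] at hw
      have hw2 : H.dist v w = (i + 1) + 1 := hw.2
      simp only [f, dif_pos hw2]
      exact (pred_exists hconn v w (i + 1) hw2).choose_spec
    have hmaps : ∀ w ∈ s, f w ∈ t := by
      intro w hw
      simp only [ht, Finset.mem_filter]
      exact ⟨Finset.mem_univ _, (hf w hw).2⟩
    have hfib : ∀ b ∈ t, (s.filter fun w => f w = b).card ≤ 2 := by
      intro b hb
      simp only [ht, Finset.mem_filter] at hb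
      obtain ⟨p, hpb, hpd⟩ := pred_exists hconn v b i hb.2
      have hsub : (s.filter fun w => f w = b) ⊆ (H.neighborSet b).toFinset \ {p} := by
        intro w hw
        simp only [Finset.mem_filter] at hw
        obtain ⟨hws, hwb⟩ := hw
        have := hf w hws
        rw [hwb] at this
        simp only [Finset.mem_sdiff, Set.mem_toFinset, SimpleGraph.mem_neighborSet,
          Finset.mem_singleton]
        constructor
        · exact this.1
        · intro hwp
          simp only [hs, Finset.mem_filter] at hws
          rw [hwp] at hws
          omega
      have hpmem : p ∈ (H.neighborSet b).toFinset := by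
        simp only [Set.mem_toFinset, SimpleGraph.mem_neighborSet]
        exact hpb.symm
      calc (s.filter fun w => f w = b).card
          ≤ ((H.neighborSet b).toFinset \ {p}).card := Finset.card_le_card hsub
        _ = (H.neighborSet b).toFinset.card - 1 := by
            rw [Finset.card_sdiff_of_subset (Finset.singleton_subset_iff.mpr hpmem)]
            simp
        _ ≤ 2 := by
            have : (H.neighborSet b).toFinset.card ≤ 3 := by
              rw [← Set.ncard_eq_toFinset_card']; exact hdeg b
            omega
    calc s.card ≤ 2 * t.card := Finset.card_le_mul_card_image_of_maps_to hmaps 2 hfib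
      _ ≤ 2 * (3 * 2 ^ i) := by exact Nat.mul_le_mul_left 2 ih
      _ = 3 * 2 ^ (i + 1) := by ring

theorem stmt_9 {V : Type*} [Fintype V] (H : SimpleGraph V) (htree : H.IsTree)
    (hdeg : ∀ v : V, (H.neighborSet v).ncard ≤ 3)
    (v : V) (S : Finset V) (hvS : v ∉ S) (c : ℕ) (hc : S.card = c) (hc1 : 1 ≤ c)
    (h : ℕ) (hh : h = 1 + Nat.log 2 ((c + 2) / 3)) :
    (c : ℤ) * h + 3 * h - 3 * (2 ^ h - 1) ≤ ∑ w ∈ S, (H.dist v w : ℤ) := by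
  classical
  have hconn : H.Connected := htree.isConnected
  -- every vertex of S is at positive distance from v
  have hpos : ∀ w ∈ S, 1 ≤ H.dist v w := by
    intro w hw
    have hne : v ≠ w := fun hvw => hvS (hvw ▸ hw)
    exact (hconn.pos_dist_of_ne hne)
  -- ball bound: at most 3 * (2^r - 1) vertices of S at distance ≤ r (as sum)
  have hball : ∀ r : ℕ, (S.filter fun w => H.dist v w ≤ r).card ≤ ∑ i ∈ Finset.range r, 3 * 2 ^ i := by
    intro r
    have hsub : (S.filter fun w => H.dist v w ≤ r) ⊆
        (Finset.range r).biUnion fun i => Finset.univ.filter fun w => H.dist v w = i + 1 := by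
      intro w hw
      simp only [Finset.mem_filter] at hw
      have h1 := hpos w hw.1
      simp only [Finset.mem_biUnion, Finset.mem_range, Finset.mem_filter]
      exact ⟨H.dist v w - 1, by omega, Finset.mem_univ _, by omega⟩
    calc (S.filter fun w => H.dist v w ≤ r).card
        ≤ ((Finset.range r).biUnion fun i =>
            Finset.univ.filter fun w => H.dist v w = i + 1).card := Finset.card_le_card hsub
      _ ≤ ∑ i ∈ Finset.range r, (Finset.univ.filter fun w => H.dist v w = i + 1).card :=
          Finset.card_biUnion_le
      _ ≤ ∑ i ∈ Finset.range r, 3 * 2 ^ i :=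
          Finset.sum_le_sum fun i _ => sphere_le H hconn hdeg v i
  -- layer count identity
  have hlayer : ∑ r ∈ Finset.range h, (S.filter fun w => r < H.dist v w).card
      = ∑ w ∈ S, min (H.dist v w) h := by
    have : ∀ r, (S.filter fun w => r < H.dist v w).card
        = ∑ w ∈ S, if r < H.dist v w then 1 else 0 := by
      intro r; rw [Finset.card_filter]
    simp_rw [this]
    rw [Finset.sum_comm]
    refine Finset.sum_congr rfl fun w _ => ?_
    rw [← Finset.card_filter]
    have : (Finset.range h).filter (fun r => r < H.dist v w) = Finset.range (min (H.dist v w) h) := by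
      ext r
      simp only [Finset.mem_filter, Finset.mem_range, lt_min_iff]
      omega
    rw [this, Finset.card_range]
  -- min sum below dist sum
  have hminle : ∑ w ∈ S, min (H.dist v w) h ≤ ∑ w ∈ S, H.dist v w :=
    Finset.sum_le_sum fun w _ => min_le_left _ _
  -- per-layer lower bound in ℤ
  have hlayerbound : ∀ r : ℕ, (c : ℤ) - 3 * (2 ^ r - 1)
      ≤ ((S.filter fun w => r < H.dist v w).card : ℤ) := by
    intro r
    have hsplit : (S.filter fun w => H.dist v w ≤ r).card
        + (S.filter fun w => r < H.dist v w).card = c := by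
      have heq : (S.filter fun w => r < H.dist v w) = (S.filter fun w => ¬ H.dist v w ≤ r) := by
        ext w; simp [not_le]
      rw [← hc, heq, Finset.card_filter_add_card_filter_not (p := fun w => H.dist v w ≤ r)]
    have hb := hball r
    have hgeom : ((∑ i ∈ Finset.range r, 3 * 2 ^ i : ℕ) : ℤ) = 3 * (2 ^ r - 1) := by
      push_cast
      rw [← Finset.mul_sum]
      congr 1
      have := geom_sum_mul (2 : ℤ) r
      simpa using this
    have hb' : ((S.filter fun w => H.dist v w ≤ r).card : ℤ) ≤ 3 * (2 ^ r - 1) := by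
      rw [← hgeom]; exact_mod_cast hb
    have := hsplit
    push_cast [← this]
    linarith
  -- put everything together
  have hsum : ∑ r ∈ Finset.range h, ((c : ℤ) - 3 * (2 ^ r - 1))
      ≤ ((∑ w ∈ S, min (H.dist v w) h : ℕ) : ℤ) := by
    rw [← hlayer]
    push_cast
    exact Finset.sum_le_sum fun r _ => hlayerbound r
  have hfinal : ∑ r ∈ Finset.range h, ((c : ℤ) - 3 * (2 ^ r - 1))
      = (c : ℤ) * h + 3 * h - 3 * (2 ^ h - 1) := by
    rw [Finset.sum_sub_distrib]
    rw [Finset.sum_const, Finset.card_range]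
    have h2 : ∑ r ∈ Finset.range h, (3 : ℤ) * (2 ^ r - 1)
        = 3 * (2 ^ h - 1) - 3 * h := by
      rw [← Finset.mul_sum, Finset.sum_sub_distrib, Finset.sum_const, Finset.card_range]
      have := geom_sum_mul (2 : ℤ) h
      simp only [show (2 : ℤ) - 1 = 1 by ring, mul_one] at this
      rw [this]; push_cast; ring
    rw [h2]; push_cast; ring
  calc (c : ℤ) * h + 3 * h - 3 * (2 ^ h - 1)
      = ∑ r ∈ Finset.range h, ((c : ℤ) - 3 * (2 ^ r - 1)) := hfinal.symm
    _ ≤ ((∑ w ∈ S, min (H.dist v w) h : ℕ) : ℤ) := hsum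
    _ ≤ ((∑ w ∈ S, H.dist v w : ℕ) : ℤ) := by exact_mod_cast hminle
    _ = ∑ w ∈ S, (H.dist v w : ℤ) := by push_cast; rfl
end

section
/- For every integer c ≥ 1, c·(⌈log₂ c⌉ + 1) ≤ 3·(c·h + 3h − 3·(2^h − 1)) where h = 1 + ⌊log₂⌈c/3⌉⌋. (Combined small-case and asymptotic bound giving the factor-3 guarantee per vertex.) -/
/- Combined per-vertex factor-3 bound: for every integer c ≥ 1,
c·(⌈log₂ c⌉ + 1) ≤ 3·(c·h + 3h − 3·(2^h − 1)) where h = 1 + ⌊log₂⌈c/3⌉⌋.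
For naturals, ⌈c/3⌉ = (c+2)/3. -/
theorem stmt_15 (c : ℕ) (hc : 1 ≤ c)
    (h : ℕ) (hh : h = 1 + Nat.log 2 ((c + 2) / 3)) :
    (c : ℤ) * (Nat.clog 2 c + 1) ≤ 3 * ((c : ℤ) * h + 3 * h - 3 * (2 ^ h - 1)) := by
  subst hh
  rcases le_or_gt c 21 with hsmall | hbig
  · interval_cases c <;> norm_num [Nat.log, Nat.clog]
  -- large case: c ≥ 22, so m := (c+2)/3 ≥ 8, k := log 2 m ≥ 3
  set m := (c + 2) / 3 with hm
  set k := Nat.log 2 m with hk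
  have hm8 : 8 ≤ m := by omega
  have hk3 : 3 ≤ k := by
    rw [hk]
    exact (Nat.le_log_iff_pow_le (by norm_num) (by omega)).mpr (by norm_num; omega)
  have hpow : 2 ^ k ≤ m := Nat.pow_log_le_self 2 (by omega)
  have hpow' : m < 2 ^ (k + 1) := Nat.lt_pow_succ_log_self (by norm_num) m
  have hcub : c ≤ 3 * m := by omega
  have hclb : 3 * m ≤ c + 2 := by omega
  -- so 3 * 2^k - 2 ≤ c and c ≤ 3 * (2^(k+1) - 1) = 6*2^k - 3 < 2^(k+3)
  have hclo : 3 * 2 ^ k ≤ c + 2 := le_trans (by omega) hclb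
  have hchi : c < 6 * 2 ^ k := by
    have : 3 * m ≤ 3 * (2 ^ (k + 1) - 1) := by omega
    have h2 : (0:ℕ) < 2 ^ k := Nat.pow_pos (by norm_num)
    calc c ≤ 3 * m := hcub
      _ ≤ 3 * (2 ^ (k+1) - 1) := this
      _ < 6 * 2 ^ k := by rw [pow_succ]; omega
  have h2kZ : (8:ℤ) ≤ 2 ^ k := by
    calc (8:ℤ) = 2 ^ 3 := by norm_num
      _ ≤ 2 ^ k := by exact pow_le_pow_right₀ (by norm_num) hk3
  have hcloZ : 3 * (2:ℤ) ^ k ≤ (c:ℤ) + 2 := by exact_mod_cast hclo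
  have hchiZ : (c:ℤ) < 6 * 2 ^ k := by exact_mod_cast hchi
  have hkZ : (3:ℤ) ≤ (k:ℤ) := by exact_mod_cast hk3
  have hcZ : (1:ℤ) ≤ (c:ℤ) := by exact_mod_cast hc
  have hpows : (2:ℤ) ^ (1 + k) = 2 * 2 ^ k := by ring
  push_cast [hpows]
  rcases le_or_gt c (2 ^ (k + 2)) with hcase | hcase
  · -- clog 2 c ≤ k + 2
    have hclog : Nat.clog 2 c ≤ k + 2 := by
      calc Nat.clog 2 c ≤ Nat.clog 2 (2 ^ (k + 2)) := Nat.clog_mono_right 2 hcase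
        _ = k + 2 := Nat.clog_pow 2 (k+2) (by norm_num)
    have hclogZ : ((Nat.clog 2 c : ℤ)) ≤ (k:ℤ) + 2 := by exact_mod_cast hclog
    have hlhs : (c:ℤ) * (Nat.clog 2 c + 1) ≤ (c:ℤ) * ((k:ℤ) + 3) := by
      apply mul_le_mul_of_nonneg_left (by linarith) (by linarith)
    refine le_trans hlhs ?_
    nlinarith [mul_nonneg (sub_nonneg.mpr h2kZ) (sub_nonneg.mpr hkZ),
      mul_nonneg (sub_nonneg.mpr hcloZ) (sub_nonneg.mpr hkZ),
      mul_nonneg (by positivity : (0:ℤ) ≤ (2:ℤ)^k) (sub_nonneg.mpr hkZ)]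
  · -- 2^(k+2) < c < 2^(k+3), so clog 2 c ≤ k + 3
    have hc3 : c ≤ 2 ^ (k + 3) := by
      have : (6:ℕ) * 2 ^ k ≤ 8 * 2 ^ k := by omega
      calc c ≤ 6 * 2 ^ k := le_of_lt hchi
        _ ≤ 2 ^ (k + 3) := by rw [pow_add]; omega
    have hclog : Nat.clog 2 c ≤ k + 3 := by
      calc Nat.clog 2 c ≤ Nat.clog 2 (2 ^ (k + 3)) := Nat.clog_mono_right 2 hc3
        _ = k + 3 := Nat.clog_pow 2 (k+3) (by norm_num)
    have hclogZ : ((Nat.clog 2 c : ℤ)) ≤ (k:ℤ) + 3 := by exact_mod_cast hclog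
    have hcaseZ : 4 * (2:ℤ) ^ k < (c:ℤ) := by
      have : (2:ℕ) ^ (k + 2) < c := hcase
      have h4 : (4:ℕ) * 2 ^ k < c := by
        have := this; rw [pow_add] at this; omega
      exact_mod_cast h4
    have hlhs : (c:ℤ) * (Nat.clog 2 c + 1) ≤ (c:ℤ) * ((k:ℤ) + 4) := by
      apply mul_le_mul_of_nonneg_left (by linarith) (by linarith)
    refine le_trans hlhs ?_
    nlinarith [mul_nonneg (sub_nonneg.mpr (le_of_lt hcaseZ)) (by linarith : (0:ℤ) ≤ 2*(k:ℤ) - 1),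
      mul_nonneg (by positivity : (0:ℤ) ≤ (2:ℤ)^k) (by linarith : (0:ℤ) ≤ 2*(k:ℤ) - 6)]
end

section
/- There exists a tree G on n vertices (a path with an alternating key assignment) such that G admits a binary tree H of cost n − 1, but every binary search tree over the given keys has cost Ω(n log n). Concretely: let G be the path visiting keys 1, n/2+1, 2, n/2+2, …, n/2, n in order (n even). Then every binary search tree T on keys {1,…,n} satisfies ∑_{uv ∈ E(G)} dist_T(u,v) = Ω(n log n), whereas taking H = G gives cost n − 1. -/
namespace BSTAux

open SimpleGraph Finset

set_option linter.unusedSectionVars false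
set_option maxHeartbeats 1000000

variable {V : Type*} [DecidableEq V] {T : SimpleGraph V}


open SimpleGraph Finset

set_option linter.unusedSectionVars false

variable {V : Type*} [DecidableEq V] {T : SimpleGraph V}

/-- metric split along a geodesic walk -/
lemma split_lemma (hc : T.Connected) {x z y : V} (p : T.Walk x z)
    (hl : p.length = T.dist x z) (hy : y ∈ p.support) :
    T.dist x z = T.dist x y + T.dist y z ∧
      (p.takeUntil y hy).length = T.dist x y ∧
      (p.dropUntil y hy).length = T.dist y z := by
  have h1 : T.dist x y ≤ (p.takeUntil y hy).length := SimpleGraph.dist_le _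
  have h2 : T.dist y z ≤ (p.dropUntil y hy).length := SimpleGraph.dist_le _
  have hsum : (p.takeUntil y hy).length + (p.dropUntil y hy).length = p.length := by
    have h := congrArg SimpleGraph.Walk.length (p.take_spec hy)
    rwa [SimpleGraph.Walk.length_append] at h
  have htri : T.dist x z ≤ T.dist x y + T.dist y z := hc.dist_triangle
  omega

/-- in a tree every path is a geodesic -/
lemma path_length_eq_dist (ht : T.IsTree) {x y : V} (p : T.Walk x y) (hp : p.IsPath) :
    p.length = T.dist x y := by
  obtain ⟨q, hq, hql⟩ := ht.isConnected.exists_path_of_dist x y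
  have := ht.IsAcyclic.path_unique ⟨p, hp⟩ ⟨q, hq⟩
  rw [Subtype.mk.injEq] at this
  rw [this, hql]

lemma isPath_append {x y z : V} {p : T.Walk x y} {q : T.Walk y z}
    (hp : p.IsPath) (hq : q.IsPath)
    (h : ∀ w, w ∈ p.support → w ∈ q.support → w = y) :
    (p.append q).IsPath := by
  rw [SimpleGraph.Walk.isPath_def, SimpleGraph.Walk.support_append]
  apply List.Nodup.append hp.support_nodup
  · have : q.support = y :: q.support.tail := q.support_eq_cons
    have := hq.support_nodup
    rw [q.support_eq_cons] at this
    exact this.of_cons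
  · intro w hw hw'
    have hwq : w ∈ q.support := List.mem_of_mem_tail hw'
    have : w = y := h w hw hwq
    subst this
    have := hq.support_nodup
    rw [q.support_eq_cons] at this
    exact (List.nodup_cons.mp this).1 hw'

/-- membership in (any, hence the unique) path iff metric betweenness -/
lemma mem_support_iff_btw (ht : T.IsTree) {x z : V} (p : T.Walk x z) (hp : p.IsPath) (y : V) :
    y ∈ p.support ↔ T.dist x z = T.dist x y + T.dist y z := by
  constructor
  · intro hy
    exact (split_lemma ht.isConnected p (path_length_eq_dist ht p hp) hy).1
  · intro hb
    obtain ⟨p1, hp1, hl1⟩ := ht.isConnected.exists_path_of_dist x y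
    obtain ⟨p2, hp2, hl2⟩ := ht.isConnected.exists_path_of_dist y z
    have hdisj : ∀ w, w ∈ p1.support → w ∈ p2.support → w = y := by
      intro w h1 h2
      have hb1 := (split_lemma ht.isConnected p1 hl1 h1).1
      have hb2 := (split_lemma ht.isConnected p2 hl2 h2).1
      have htri1 : T.dist x z ≤ T.dist x w + T.dist w z := ht.isConnected.dist_triangle
      have htri2 : T.dist w z ≤ T.dist w y + T.dist y z := ht.isConnected.dist_triangle
      have hcomm : T.dist w y = T.dist y w := SimpleGraph.dist_comm ..
      have hzero : T.dist y w = 0 := by omega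
      exact (ht.isConnected.dist_eq_zero_iff.mp hzero).symm
    have hq : (p1.append p2).IsPath := isPath_append hp1 hp2 hdisj
    have hpq : p = p1.append p2 := by
      have := ht.IsAcyclic.path_unique ⟨p, hp⟩ ⟨_, hq⟩
      exact congrArg Subtype.val this
    rw [hpq, SimpleGraph.Walk.mem_support_append_iff]
    exact Or.inl (SimpleGraph.Walk.end_mem_support p1)
  





-- placeholders from base (will concatenate later)








lemma adj_dist_ne (ht : T.IsTree) (r : V) {x y : V} (h : T.Adj x y) : T.dist r x ≠ T.dist r y := by
  intro heq
  obtain ⟨p, hp, hl⟩ := ht.isConnected.exists_path_of_dist r x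
  by_cases hy : y ∈ p.support
  · have hs := (split_lemma ht.isConnected p hl hy).1
    have hyx : 1 ≤ T.dist y x :=
      ht.isConnected.pos_dist_of_ne h.ne.symm
    omega
  · have hq : (p.append (SimpleGraph.Walk.cons h SimpleGraph.Walk.nil)).IsPath := by
      apply isPath_append hp
      · simp [SimpleGraph.Walk.isPath_def, h.ne]
      · intro w hw hw'
        simp [SimpleGraph.Walk.support_cons, SimpleGraph.Walk.support_nil] at hw'
        rcases hw' with rfl | rfl
        · rfl
        · exact absurd hw hy
    have hlen := path_length_eq_dist ht _ hq
    rw [SimpleGraph.Walk.length_append] at hlen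
    simp only [SimpleGraph.Walk.length_cons, SimpleGraph.Walk.length_nil] at hlen
    omega

lemma adj_dist_cases (ht : T.IsTree) (r : V) {x y : V} (h : T.Adj x y) :
    T.dist r y = T.dist r x + 1 ∨ T.dist r x = T.dist r y + 1 := by
  have h1 : T.dist x y = 1 := SimpleGraph.dist_eq_one_iff_adj.mpr h
  have h2 : T.dist y x = 1 := SimpleGraph.dist_eq_one_iff_adj.mpr h.symm
  have t1 : T.dist r y ≤ T.dist r x + T.dist x y := ht.isConnected.dist_triangle
  have t2 : T.dist r x ≤ T.dist r y + T.dist y x := ht.isConnected.dist_triangle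
  have hne := adj_dist_ne ht r h
  omega

lemma comparable (ht : T.IsTree) {r u v x : V}
    (hv : T.dist r u = T.dist r v + T.dist v u)
    (hx : T.dist r u = T.dist r x + T.dist x u) :
    T.dist r x = T.dist r v + T.dist v x ∨ T.dist r v = T.dist r x + T.dist x v := by
  obtain ⟨p, hp, hl⟩ := ht.isConnected.exists_path_of_dist r u
  have hvmem : v ∈ p.support := (mem_support_iff_btw ht p hp v).mpr hv
  have hxmem : x ∈ p.support := (mem_support_iff_btw ht p hp x).mpr hx
  by_cases hvt : v ∈ (p.takeUntil x hxmem).support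
  · left
    have := (mem_support_iff_btw ht _ (hp.takeUntil hxmem) v).mp hvt
    have hlt := (split_lemma ht.isConnected p hl hxmem).2.1
    have := (split_lemma ht.isConnected (p.takeUntil x hxmem) hlt hvt).1
    exact this
  · have hvd : v ∈ (p.dropUntil x hxmem).support := by
      rw [← p.take_spec hxmem, SimpleGraph.Walk.mem_support_append_iff] at hvmem
      tauto
    have hld := (split_lemma ht.isConnected p hl hxmem).2.2
    have hbxvu := (split_lemma ht.isConnected (p.dropUntil x hxmem) hld hvd).1
    right
    have t1 : T.dist r u ≤ T.dist r v + T.dist v u := ht.isConnected.dist_triangle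
    have t2 : T.dist r v ≤ T.dist r x + T.dist x v := ht.isConnected.dist_triangle
    omega

lemma btw_step (ht : T.IsTree) {r v u x : V}
    (hu : T.dist r u = T.dist r v + T.dist v u) (hne : u ≠ v)
    (hadj : T.Adj u x) (hxv : x ≠ v) :
    T.dist r x = T.dist r v + T.dist v x := by
  have hvu : 1 ≤ T.dist v u := ht.isConnected.pos_dist_of_ne (Ne.symm hne)
  have hux : T.dist u x = 1 := SimpleGraph.dist_eq_one_iff_adj.mpr hadj
  have hxu : T.dist x u = 1 := SimpleGraph.dist_eq_one_iff_adj.mpr hadj.symm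
  rcases adj_dist_cases ht r hadj with hcase | hcase
  · have t1 : T.dist r x ≤ T.dist r v + T.dist v x := ht.isConnected.dist_triangle
    have t2 : T.dist v x ≤ T.dist v u + T.dist u x := ht.isConnected.dist_triangle
    omega
  · have hbxu : T.dist r u = T.dist r x + T.dist x u := by omega
    rcases comparable ht hu hbxu with hgood | hbad
    · exact hgood
    · exfalso
      have h0 : T.dist x v = 0 := by omega
      exact hxv (ht.isConnected.dist_eq_zero_iff.mp h0)

lemma walk_stays (ht : T.IsTree) {r v : V} {a b : V} (p : T.Walk a b)
    (ha : T.dist r a = T.dist r v + T.dist v a) (hv : v ∉ p.support) :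
    T.dist r b = T.dist r v + T.dist v b := by
  induction p with
  | nil => exact ha
  | cons h q ih =>
    rename_i s t w
    rw [SimpleGraph.Walk.support_cons] at hv
    simp only [List.mem_cons, not_or] at hv
    have hts : t ∈ q.support := SimpleGraph.Walk.start_mem_support q
    have hvt : v ∉ q.support := fun hh => hv.2 hh
    have h2 : t ≠ v := fun hh => hvt (hh ▸ hts)
    exact ih (btw_step ht ha (fun hh => hv.1 hh.symm) h h2) hvt


lemma btw_self (ht : T.IsTree) (r v : V) : T.dist r v = T.dist r v + T.dist v v := by
  simp

lemma subtree_exit (ht : T.IsTree) {r v u u' : V}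
    (hu : T.dist r u = T.dist r v + T.dist v u)
    (hu' : ¬ (T.dist r u' = T.dist r v + T.dist v u')) :
    T.dist v u + 1 ≤ T.dist u u' := by
  obtain ⟨p, hp, hl⟩ := ht.isConnected.exists_path_of_dist u u'
  by_cases hv : v ∈ p.support
  · have hs := (split_lemma ht.isConnected p hl hv).1
    have hne : v ≠ u' := fun hh => hu' (hh ▸ btw_self ht r v)
    have hpos : 1 ≤ T.dist v u' := ht.isConnected.pos_dist_of_ne hne
    have hcomm : T.dist u v = T.dist v u := SimpleGraph.dist_comm ..
    omega
  · exact absurd (walk_stays ht p hu hv) hu'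

lemma child_exists (ht : T.IsTree) {r v u : V}
    (hu : T.dist r u = T.dist r v + T.dist v u) (hne : u ≠ v) :
    ∃ x, T.Adj v x ∧ T.dist r x = T.dist r v + T.dist v x ∧
      T.dist r u = T.dist r x + T.dist x u := by
  obtain ⟨p, hp, hl⟩ := ht.isConnected.exists_path_of_dist r u
  have hv : v ∈ p.support := (mem_support_iff_btw ht p hp v).mpr hu
  have hld := (split_lemma ht.isConnected p hl hv).2.2
  have hvu : 1 ≤ T.dist v u := ht.isConnected.pos_dist_of_ne (Ne.symm hne)
  have hnenil : v ≠ u := Ne.symm hne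
  obtain ⟨x, h, q, heq⟩ := SimpleGraph.Walk.exists_eq_cons_of_ne hnenil (p.dropUntil v hv)
  have hdp : (p.dropUntil v hv).IsPath := hp.dropUntil hv
  have hqp : q.IsPath := by
    rw [heq] at hdp
    exact (SimpleGraph.Walk.cons_isPath_iff h q).mp hdp |>.1
  have hql : q.length = T.dist v u - 1 := by
    have := congrArg SimpleGraph.Walk.length heq
    rw [SimpleGraph.Walk.length_cons] at this
    omega
  have hxu_le : T.dist x u ≤ T.dist v u - 1 := hql ▸ SimpleGraph.dist_le q
  have hxmem : x ∈ p.support := by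
    apply SimpleGraph.Walk.support_dropUntil_subset p hv
    rw [heq]
    rw [SimpleGraph.Walk.support_cons]
    exact List.mem_cons_of_mem _ (SimpleGraph.Walk.start_mem_support q)
  have hbxu : T.dist r u = T.dist r x + T.dist x u := (mem_support_iff_btw ht p hp x).mp hxmem
  have hvx : T.dist v x = 1 := SimpleGraph.dist_eq_one_iff_adj.mpr h
  rcases adj_dist_cases ht r h with hcase | hcase
  · exact ⟨x, h, by omega, hbxu⟩
  · exfalso
    omega

lemma parent_exists (ht : T.IsTree) {r x₀ u : V} {d : ℕ}
    (hu : T.dist r u = T.dist r x₀ + T.dist x₀ u)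
    (hd : T.dist x₀ u = d + 1) :
    ∃ w, T.Adj w u ∧ T.dist x₀ w = d ∧
      T.dist r w = T.dist r x₀ + T.dist x₀ w := by
  obtain ⟨p, hp, hl⟩ := ht.isConnected.exists_path_of_dist x₀ u
  have hne : u ≠ x₀ := by
    intro hh
    subst hh
    simp [SimpleGraph.dist_self] at hd
  obtain ⟨w, h, q, heq⟩ := SimpleGraph.Walk.exists_eq_cons_of_ne hne p.reverse
  have hqp : q.IsPath := by
    have := hp.reverse
    rw [heq] at this
    exact (SimpleGraph.Walk.cons_isPath_iff h q).mp this |>.1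
  have hql : q.length = d := by
    have := congrArg SimpleGraph.Walk.length heq
    rw [SimpleGraph.Walk.length_cons, SimpleGraph.Walk.length_reverse, hl, hd] at this
    omega
  have hwx : T.dist w x₀ = d := by
    rw [← path_length_eq_dist ht q hqp, hql]
  have hx0w : T.dist x₀ w = d := by rw [SimpleGraph.dist_comm]; exact hwx
  have hwu : T.dist w u = 1 := SimpleGraph.dist_eq_one_iff_adj.mpr h.symm
  have t1 : T.dist r w ≤ T.dist r x₀ + T.dist x₀ w := ht.isConnected.dist_triangle
  have t2 : T.dist r u ≤ T.dist r w + T.dist w u := ht.isConnected.dist_triangle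
  exact ⟨w, h.symm, hx0w, by omega⟩









lemma fin_lt1 {m : ℕ} (i : Fin m) : i.1 < 2 * m := by have := i.2; omega
lemma fin_lt2 {m : ℕ} (i : Fin m) : m + i.1 < 2 * m := by have := i.2; omega
lemma fin_lt3 {m : ℕ} (i : Fin (m - 1)) : m + i.1 < 2 * m := by have := i.2; omega
lemma fin_lt4 {m : ℕ} (i : Fin (m - 1)) : i.1 + 1 < 2 * m := by have := i.2; omega

theorem lower_bound {m : ℕ} (hm : 1024 ≤ m) (T : SimpleGraph (Fin (2*m))) (ht : T.IsTree)
    (hdeg : ∀ v, (T.neighborSet v).ncard ≤ 3) (root : Fin (2*m))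
    (hI : ∀ v : Fin (2*m), ∃ a b : ℕ, ∀ w : Fin (2*m),
      (T.dist root w = T.dist root v + T.dist v w) ↔ (a ≤ (w : ℕ) ∧ (w : ℕ) ≤ b)) :
    (1/100 : ℝ) * (2*m) * Real.log (2*m) ≤
      ((∑ i : Fin m, T.dist ⟨i.1, fin_lt1 i⟩ ⟨m + i.1, fin_lt2 i⟩ : ℕ) : ℝ) := by
  classical
  have hm0 : 0 < m := by omega
  -- subtree finsets
  set Sf : Fin (2*m) → Finset (Fin (2*m)) :=
    fun v => univ.filter (fun w => T.dist root w = T.dist root v + T.dist v w) with hSf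
  have mem_Sf : ∀ {v w : Fin (2*m)}, w ∈ Sf v ↔ T.dist root w = T.dist root v + T.dist v w := by
    intro v w; simp [hSf]
  -- interval lemma
  have interval_card : ∀ (v : Fin (2*m)) (x y : Fin (2*m)), x ∈ Sf v → y ∈ Sf v →
      (y : ℕ) = (x : ℕ) + m → m + 1 ≤ (Sf v).card := by
    intro v x y hx hy hxy
    obtain ⟨a, b, hab⟩ := hI v
    have hax : a ≤ (x : ℕ) := ((hab x).mp (mem_Sf.mp hx)).1
    have hyb : (y : ℕ) ≤ b := ((hab y).mp (mem_Sf.mp hy)).2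
    have hcard : (Finset.Icc (x : ℕ) ((x : ℕ) + m)).card = m + 1 := by
      rw [Nat.card_Icc]; omega
    rw [← hcard]
    apply Finset.card_le_card_of_injOn
      (fun j => if h : j < 2*m then (⟨j, h⟩ : Fin (2*m)) else x)
    · intro j hj
      simp only [Finset.mem_coe, Finset.mem_Icc] at hj
      have hjn : j < 2*m := by have := y.isLt; omega
      simp only [hjn, dif_pos]
      exact mem_Sf.mpr ((hab ⟨j, hjn⟩).mpr ⟨by simp; omega, by simp; omega⟩)
    · intro j hj j' hj' hjj
      simp only [Finset.mem_coe, Finset.mem_Icc] at hj hj'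
      have hjn : j < 2*m := by have := y.isLt; omega
      have hjn' : j' < 2*m := by have := y.isLt; omega
      simp only [hjn, hjn', dif_pos] at hjj
      have := congrArg Fin.val hjj
      simpa using this
  -- subset
  have subtree_subset : ∀ {v u : Fin (2*m)}, u ∈ Sf v → Sf u ⊆ Sf v := by
    intro v u hu w hw
    rw [mem_Sf] at *
    have t1 : T.dist root w ≤ T.dist root v + T.dist v w := ht.isConnected.dist_triangle
    have t2 : T.dist v w ≤ T.dist v u + T.dist u w := ht.isConnected.dist_triangle
    omega
  have self_mem : ∀ v : Fin (2*m), v ∈ Sf v := by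
    intro v; rw [mem_Sf]; simp
  have antisymm : ∀ {v u : Fin (2*m)}, u ∈ Sf v → v ∈ Sf u → u = v := by
    intro v u hu hv
    rw [mem_Sf] at hu hv
    have h0 : T.dist v u = 0 := by omega
    exact (ht.isConnected.dist_eq_zero_iff.mp h0).symm
  -- Big and minimal big vertex
  have root_big : m + 1 ≤ (Sf root).card := by
    have : Sf root = univ := by
      apply Finset.eq_univ_iff_forall.mpr
      intro w; rw [mem_Sf]; simp
    rw [this, Finset.card_univ, Fintype.card_fin]; omega
  obtain ⟨vs, hvs_mem, hvs_min⟩ := Finset.exists_min_image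
    (univ.filter (fun v => m + 1 ≤ (Sf v).card)) (fun v => (Sf v).card)
    ⟨root, by simp [root_big]; omega⟩
  have hvs_big : m + 1 ≤ (Sf vs).card := (Finset.mem_filter.mp hvs_mem).2
  -- children
  set C : Finset (Fin (2*m)) := univ.filter (fun x => T.Adj vs x ∧ x ∈ Sf vs) with hC
  have cover : Sf vs ⊆ insert vs (C.biUnion Sf) := by
    intro u hu
    by_cases huv : u = vs
    · simp [huv]
    · obtain ⟨x, hadj, hbx, hbu⟩ := child_exists ht (mem_Sf.mp hu) huv
      apply Finset.mem_insert_of_mem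
      apply Finset.mem_biUnion.mpr
      exact ⟨x, Finset.mem_filter.mpr ⟨Finset.mem_univ _, hadj, mem_Sf.mpr hbx⟩, mem_Sf.mpr hbu⟩
  have hCcard : C.card ≤ 3 := by
    have hsub : C ⊆ (T.neighborSet vs).toFinite.toFinset := by
      intro x hx
      rw [Set.Finite.mem_toFinset]
      exact (Finset.mem_filter.mp hx).2.1
    calc C.card ≤ _ := Finset.card_le_card hsub
      _ = (T.neighborSet vs).ncard := (Set.ncard_eq_toFinset_card _ _).symm
      _ ≤ 3 := hdeg vs
  have child_small : ∀ x ∈ C, (Sf x).card ≤ m := by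
    intro x hx
    rw [hC, Finset.mem_filter] at hx
    obtain ⟨-, hadj, hxv⟩ := hx
    by_contra hbig
    push_neg at hbig
    have hxbig : x ∈ univ.filter (fun v => m + 1 ≤ (Sf v).card) := by
      simp; omega
    have hmin := hvs_min x hxbig
    have hsub : Sf x ⊆ (Sf vs).erase vs := by
      intro w hw
      apply Finset.mem_erase.mpr
      refine ⟨?_, subtree_subset hxv hw⟩
      intro hwv
      subst hwv
      exact hadj.ne (antisymm hxv hw).symm
    have := Finset.card_le_card hsub
    rw [Finset.card_erase_of_mem (self_mem vs)] at this
    omega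
  -- find big child x₀
  have hCsum : m ≤ ∑ x ∈ C, (Sf x).card := by
    have h1 := Finset.card_le_card cover
    have h2 : (insert vs (C.biUnion Sf)).card ≤ 1 + (C.biUnion Sf).card := by
      apply le_trans (Finset.card_insert_le _ _); omega
    have h3 : (C.biUnion Sf).card ≤ ∑ x ∈ C, (Sf x).card := Finset.card_biUnion_le
    omega
  have hCne : C.Nonempty := by
    by_contra h
    rw [Finset.not_nonempty_iff_eq_empty] at h
    rw [h] at hCsum
    simp at hCsum
    omega
  obtain ⟨x₀, hx₀C, hx₀max⟩ := Finset.exists_max_image C (fun x => (Sf x).card) hCne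
  have hfm : m ≤ 3 * (Sf x₀).card := by
    have : ∑ x ∈ C, (Sf x).card ≤ C.card * (Sf x₀).card := by
      apply Finset.sum_le_card_nsmul
      intro x hx; exact hx₀max x hx
    have := hCsum.trans this
    nlinarith [hCcard]
  have hfsmall : (Sf x₀).card ≤ m := child_small x₀ hx₀C
  have hx₀vs : x₀ ∈ Sf vs := (Finset.mem_filter.mp (hC ▸ hx₀C)).2.2
  have hx₀adj : T.Adj vs x₀ := (Finset.mem_filter.mp (hC ▸ hx₀C)).2.1
  have hvs_not : vs ∉ Sf x₀ := by
    intro h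
    exact hx₀adj.ne (antisymm hx₀vs h).symm
  -- levels
  set L : ℕ → Finset (Fin (2*m)) := fun d => (Sf x₀).filter (fun u => T.dist x₀ u = d) with hL
  have hL0 : L 0 ⊆ {x₀} := by
    intro u hu
    rw [hL, Finset.mem_filter] at hu
    rw [Finset.mem_singleton]
    exact (ht.isConnected.dist_eq_zero_iff.mp hu.2).symm
  have par_ex : ∀ d (u : Fin (2*m)), u ∈ L (d+1) →
      ∃ w, T.Adj w u ∧ T.dist x₀ w = d ∧ w ∈ Sf x₀ := by
    intro d u hu
    rw [hL, Finset.mem_filter] at hu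
    obtain ⟨w, h1, h2, h3⟩ := parent_exists ht (mem_Sf.mp hu.1) hu.2
    exact ⟨w, h1, h2, mem_Sf.mpr h3⟩
  choose! par hpar1 hpar2 hpar3 using par_ex
  have fiber_bound : ∀ d, ∀ w ∈ L d,
      ((L (d+1)).filter (fun u => par d u = w)).card ≤ 2 := by
    intro d w hw
    cases d with
    | zero =>
      have hwx : w = x₀ := Finset.mem_singleton.mp (hL0 hw)
      subst hwx
      have hsub : (L 1).filter (fun u => par 0 u = w) ⊆
          ((T.neighborSet w).toFinite.toFinset).erase vs := by
        intro u hu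
        rw [Finset.mem_filter] at hu
        obtain ⟨huL, hpu⟩ := hu
        apply Finset.mem_erase.mpr
        constructor
        · intro huvs
          subst huvs
          exact hvs_not ((Finset.mem_filter.mp (hL ▸ huL)).1)
        · rw [Set.Finite.mem_toFinset]
          have := hpar1 0 u huL
          rw [hpu] at this
          exact this
      have hvsmem : vs ∈ (T.neighborSet w).toFinite.toFinset := by
        rw [Set.Finite.mem_toFinset]
        exact hx₀adj.symm
      calc ((L 1).filter (fun u => par 0 u = w)).card
          ≤ _ := Finset.card_le_card hsub
        _ = (T.neighborSet w).toFinite.toFinset.card - 1 :=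
            Finset.card_erase_of_mem hvsmem
        _ ≤ 3 - 1 := by
            have : (T.neighborSet w).toFinite.toFinset.card = (T.neighborSet w).ncard :=
              (Set.ncard_eq_toFinset_card _ _).symm
            have h3 := hdeg w
            omega
        _ ≤ 2 := by omega
    | succ d' =>
      have h1 := hpar1 d' w hw
      have h2 := hpar2 d' w hw
      have hsub : (L (d'+1+1)).filter (fun u => par (d'+1) u = w) ⊆
          ((T.neighborSet w).toFinite.toFinset).erase (par d' w) := by
        intro u hu
        rw [Finset.mem_filter] at hu
        obtain ⟨huL, hpu⟩ := hu
        apply Finset.mem_erase.mpr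
        constructor
        · intro huz
          have hdu : T.dist x₀ u = d' + 1 + 1 := by
            rw [hL, Finset.mem_filter] at huL
            exact huL.2
          rw [huz, h2] at hdu
          omega
        · rw [Set.Finite.mem_toFinset]
          have := hpar1 (d'+1) u huL
          rw [hpu] at this
          exact this
      have hzmem : par d' w ∈ (T.neighborSet w).toFinite.toFinset := by
        rw [Set.Finite.mem_toFinset]
        exact h1.symm
      calc ((L (d'+1+1)).filter (fun u => par (d'+1) u = w)).card
          ≤ _ := Finset.card_le_card hsub
        _ = (T.neighborSet w).toFinite.toFinset.card - 1 :=
            Finset.card_erase_of_mem hzmem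
        _ ≤ 3 - 1 := by
            have : (T.neighborSet w).toFinite.toFinset.card = (T.neighborSet w).ncard :=
              (Set.ncard_eq_toFinset_card _ _).symm
            have h3 := hdeg w
            omega
        _ ≤ 2 := by omega
  have level_card : ∀ d, (L (d+1)).card ≤ 2 * (L d).card := by
    intro d
    have hsub : L (d+1) ⊆ (L d).biUnion
        (fun w => (L (d+1)).filter (fun u => par d u = w)) := by
      intro u hu
      apply Finset.mem_biUnion.mpr
      refine ⟨par d u, ?_, Finset.mem_filter.mpr ⟨hu, rfl⟩⟩
      rw [hL, Finset.mem_filter]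
      exact ⟨hpar3 d u hu, hpar2 d u hu⟩
    calc (L (d+1)).card ≤ _ := Finset.card_le_card hsub
      _ ≤ ∑ w ∈ L d, ((L (d+1)).filter (fun u => par d u = w)).card :=
          Finset.card_biUnion_le
      _ ≤ ∑ w ∈ L d, 2 := Finset.sum_le_sum (fiber_bound d)
      _ = 2 * (L d).card := by rw [Finset.sum_const, smul_eq_mul]; ring
  have Lcard : ∀ d, (L d).card ≤ 2^d := by
    intro d
    induction d with
    | zero =>
      have := Finset.card_le_card hL0
      simpa using this
    | succ d ih =>
      have := level_card d
      calc (L (d+1)).card ≤ 2 * (L d).card := this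
        _ ≤ 2 * 2^d := by omega
        _ = 2^(d+1) := by ring
  -- choose threshold D
  set D : ℕ := Nat.log 2 m - 3 with hD
  have hlog10 : 10 ≤ Nat.log 2 m := by
    have h1 : Nat.log 2 1024 = 10 := by
      have : (1024 : ℕ) = 2^10 := by norm_num
      rw [this, Nat.log_pow (by norm_num)]
    calc 10 = Nat.log 2 1024 := h1.symm
      _ ≤ Nat.log 2 m := Nat.log_mono_right hm
  have hpow1 : 2^(Nat.log 2 m) ≤ m := Nat.pow_log_le_self 2 (by omega)
  have hpow2 : m < 2^(Nat.log 2 m + 1) := Nat.lt_pow_succ_log_self (by norm_num) m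
  have hD3 : D + 3 = Nat.log 2 m := by rw [hD]; omega
  have h8D : 8 * 2^D = 2^(Nat.log 2 m) := by
    rw [← hD3, pow_add]
    ring
  -- small/big split
  have Bcard : ((Sf x₀).filter (fun u => T.dist x₀ u < D)).card ≤ 2^D - 1 := by
    have hsub : (Sf x₀).filter (fun u => T.dist x₀ u < D) ⊆
        (Finset.range D).biUnion L := by
      intro u hu
      rw [Finset.mem_filter] at hu
      apply Finset.mem_biUnion.mpr
      refine ⟨T.dist x₀ u, Finset.mem_range.mpr hu.2, ?_⟩
      rw [hL, Finset.mem_filter]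
      exact ⟨hu.1, rfl⟩
    have geo : ∑ d ∈ Finset.range D, 2^d = 2^D - 1 := by
      induction D with
      | zero => simp
      | succ k ih =>
        rw [Finset.sum_range_succ, ih]
        have : 1 ≤ 2^k := Nat.one_le_two_pow
        have : (2:ℕ)^(k+1) = 2^k + 2^k := by ring
        omega
    calc ((Sf x₀).filter (fun u => T.dist x₀ u < D)).card
        ≤ ((Finset.range D).biUnion L).card := Finset.card_le_card hsub
      _ ≤ ∑ d ∈ Finset.range D, (L d).card := Finset.card_biUnion_le
      _ ≤ ∑ d ∈ Finset.range D, 2^d := Finset.sum_le_sum (fun d _ => Lcard d)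
      _ = 2^D - 1 := geo
  set A : Finset (Fin (2*m)) := (Sf x₀).filter (fun u => ¬ (T.dist x₀ u < D)) with hA
  have hsplit : ((Sf x₀).filter (fun u => T.dist x₀ u < D)).card + A.card = (Sf x₀).card :=
    Finset.card_filter_add_card_filter_not ..
  have hAf : (Sf x₀).card ≤ 2 * A.card := by
    have h2D : 2 * 2^D ≤ (Sf x₀).card := by
      have h1 : 1 ≤ 2^D := Nat.one_le_two_pow
      omega
    have h1 : 1 ≤ 2^D := Nat.one_le_two_pow
    omega
  -- the natural number sum over the subtree
  have hSA : A.card * D ≤ ∑ u ∈ Sf x₀, (T.dist x₀ u + 1) := by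
    calc A.card * D = ∑ _u ∈ A, D := by rw [Finset.sum_const, smul_eq_mul]
      _ ≤ ∑ u ∈ A, (T.dist x₀ u + 1) := by
          apply Finset.sum_le_sum
          intro u hu
          rw [hA, Finset.mem_filter] at hu
          omega
      _ ≤ ∑ u ∈ Sf x₀, (T.dist x₀ u + 1) :=
          Finset.sum_le_sum_of_subset (Finset.filter_subset _ _)
  have hmD : m * D ≤ 6 * ∑ u ∈ Sf x₀, (T.dist x₀ u + 1) := by
    have h1 : m * D ≤ (3 * (Sf x₀).card) * D := Nat.mul_le_mul_right _ hfm
    have h2 : (Sf x₀).card * D ≤ (2 * A.card) * D := Nat.mul_le_mul_right _ hAf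
    have h3 : A.card * D ≤ ∑ u ∈ Sf x₀, (T.dist x₀ u + 1) := hSA
    nlinarith
  -- connect to the edge sum
  have edge_bound : ∀ (p q : Fin (2*m)), ((q : ℕ) = (p : ℕ) + m) →
      ∀ u ∈ Sf x₀, (u = p ∨ u = q) → T.dist x₀ u + 1 ≤ T.dist p q := by
    intro p q hpq u hu hcase
    rcases hcase with rfl | rfl
    · have hq : q ∉ Sf x₀ := by
        intro hq
        have := interval_card x₀ u q hu hq hpq
        omega
      exact subtree_exit ht (mem_Sf.mp hu) (fun h => hq (mem_Sf.mpr h))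
    · have hp : p ∉ Sf x₀ := by
        intro hp
        have := interval_card x₀ p u hp hu hpq
        omega
      have h := subtree_exit ht (mem_Sf.mp hu) (fun h => hp (mem_Sf.mpr h))
      rw [show T.dist p u = T.dist u p from SimpleGraph.dist_comm ..]
      exact h
  have hmod : ∀ k, k < 2*m → k % m = if k < m then k else k - m := by
    intro k hk
    split_ifs with h
    · exact Nat.mod_eq_of_lt h
    · rw [Nat.mod_eq_sub_mod (le_of_not_gt h), Nat.mod_eq_of_lt (by omega)]
  set key : Fin (2*m) → Fin m := fun u => ⟨(u : ℕ) % m, Nat.mod_lt _ hm0⟩ with hkey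
  set g : Fin m → ℕ := fun i => T.dist
      (⟨i.1, by have := i.2; omega⟩ : Fin (2*m))
      (⟨m + i.1, by have := i.2; omega⟩ : Fin (2*m)) with hg
  have point_bound : ∀ u ∈ Sf x₀, T.dist x₀ u + 1 ≤ g (key u) := by
    intro u hu
    have hmu := hmod u.1 u.isLt
    rw [hg]
    apply edge_bound _ _ ?hval u hu ?hor
    case hval =>
      simp
      omega
    case hor =>
      by_cases hcase : (u : ℕ) < m
      · left
        apply Fin.ext
        simp only [hkey, Fin.val_mk]
        rw [hmu]
        simp [hcase]
      · right
        apply Fin.ext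
        simp only [hkey, Fin.val_mk]
        rw [hmu]
        simp only [hcase, if_false]
        have := u.isLt
        omega
  have key_inj : ∀ u ∈ Sf x₀, ∀ u' ∈ Sf x₀, key u = key u' → u = u' := by
    intro u hu u' hu' hk
    have hval : (u : ℕ) % m = (u' : ℕ) % m := congrArg Fin.val hk
    have h1 := hmod u.1 u.isLt
    have h2 := hmod u'.1 u'.isLt
    by_cases c1 : (u : ℕ) < m <;> by_cases c2 : (u' : ℕ) < m
    · apply Fin.ext
      rw [h1, h2] at hval
      simpa [c1, c2] using hval
    · exfalso
      rw [h1, h2] at hval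
      simp only [c1, c2, if_true, if_false] at hval
      have hrel : (u' : ℕ) = (u : ℕ) + m := by
        have := u'.isLt
        omega
      have := interval_card x₀ u u' hu hu' hrel
      omega
    · exfalso
      rw [h1, h2] at hval
      simp only [c1, c2, if_true, if_false] at hval
      have hrel : (u : ℕ) = (u' : ℕ) + m := by
        have := u.isLt
        omega
      have := interval_card x₀ u' u hu' hu hrel
      omega
    · apply Fin.ext
      rw [h1, h2] at hval
      simp only [c1, c2, if_false] at hval
      have := u.isLt
      have := u'.isLt
      omega
  have hsum_edges : ∑ u ∈ Sf x₀, (T.dist x₀ u + 1) ≤ ∑ i : Fin m, g i := by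
    calc ∑ u ∈ Sf x₀, (T.dist x₀ u + 1)
        ≤ ∑ u ∈ Sf x₀, g (key u) := Finset.sum_le_sum point_bound
      _ = ∑ i ∈ (Sf x₀).image key, g i := (Finset.sum_image key_inj).symm
      _ ≤ ∑ i ∈ (univ : Finset (Fin m)), g i :=
          Finset.sum_le_sum_of_subset (Finset.subset_univ _)
  -- final arithmetic
  have hnat : m * D ≤ 6 * ∑ i : Fin m, g i := by
    calc m * D ≤ 6 * ∑ u ∈ Sf x₀, (T.dist x₀ u + 1) := hmD
      _ ≤ 6 * ∑ i : Fin m, g i := by omega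
  have hgoal_sum : ((∑ i : Fin m, g i : ℕ) : ℝ) =
      ((∑ i : Fin m, T.dist (⟨i.1, by have := i.2; omega⟩ : Fin (2*m))
        (⟨m + i.1, by have := i.2; omega⟩ : Fin (2*m)) : ℕ) : ℝ) := by
    rw [hg]
  rw [← hgoal_sum]
  have hcastD : (D : ℝ) = (Nat.log 2 m : ℝ) - 3 := by
    rw [hD]
    push_cast [Nat.cast_sub (by omega : 3 ≤ Nat.log 2 m)]
    ring
  have hlogle : Real.log (2*m) ≤ (Nat.log 2 m : ℝ) + 2 := by
    have h2m : (0:ℝ) < 2*m := by positivity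
    have hle : (2*m : ℝ) ≤ 2^(Nat.log 2 m + 2) := by
      have : (m : ℝ) < 2^(Nat.log 2 m + 1) := by
        exact_mod_cast hpow2
      have hpw : ((2:ℝ))^(Nat.log 2 m + 2) = 2 * 2^(Nat.log 2 m + 1) := by ring
      rw [hpw]
      linarith
    calc Real.log (2*m) ≤ Real.log (2^(Nat.log 2 m + 2)) :=
          Real.log_le_log h2m hle
      _ = (Nat.log 2 m + 2 : ℕ) * Real.log 2 := by
          rw [Real.log_pow]
      _ ≤ (Nat.log 2 m + 2 : ℕ) * 1 := by
          have h2 : Real.log 2 ≤ 1 := by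
            have := Real.log_two_lt_d9
            linarith
          have h0 : (0:ℝ) ≤ ((Nat.log 2 m + 2 : ℕ) : ℝ) := by positivity
          exact mul_le_mul_of_nonneg_left h2 h0
      _ = (Nat.log 2 m : ℝ) + 2 := by push_cast; ring
  have hfinal : (1/100 : ℝ) * (2*m) * Real.log (2*m) ≤ (m : ℝ) * D / 6 := by
    have hm' : (0:ℝ) ≤ (m:ℝ) := by positivity
    have hlog' : Real.log (2*m) ≤ (25/3 : ℝ) * D := by
      rw [hcastD]
      have hl : (10 : ℝ) ≤ (Nat.log 2 m : ℝ) := by exact_mod_cast hlog10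
      linarith [hlogle]
    have hlhs : (1/100 : ℝ) * (2*m) * Real.log (2*m) ≤
        (1/100 : ℝ) * (2*m) * ((25/3 : ℝ) * D) := by
      apply mul_le_mul_of_nonneg_left hlog' (by positivity)
    calc (1/100 : ℝ) * (2*m) * Real.log (2*m)
        ≤ (1/100 : ℝ) * (2*m) * ((25/3 : ℝ) * D) := hlhs
      _ = (m : ℝ) * D / 6 := by ring
  have hcast : (m : ℝ) * D ≤ 6 * ((∑ i : Fin m, g i : ℕ) : ℝ) := by
    exact_mod_cast hnat
  calc (1/100 : ℝ) * (2*m) * Real.log (2*m) ≤ (m : ℝ) * D / 6 := hfinal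
    _ ≤ ((∑ i : Fin m, g i : ℕ) : ℝ) := by linarith





lemma pathGraph_bridge_helper (n : ℕ) (v w : Fin n) (h : (v:ℕ) + 1 = (w:ℕ)) :
    ¬ (pathGraph n \ fromEdgeSet {s(v,w)}).Reachable v w := by
  intro hreach
  obtain ⟨p⟩ := hreach
  have key : ∀ (a b : Fin n) (q : (pathGraph n \ fromEdgeSet {s(v,w)}).Walk a b),
      (a:ℕ) ≤ (v:ℕ) → (b:ℕ) ≤ (v:ℕ) := by
    intro a b q
    induction q with
    | nil => exact fun h => h
    | cons hadj q ih =>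
      intro ha
      apply ih
      rename_i x y _
      rw [SimpleGraph.sdiff_adj] at hadj
      obtain ⟨hpg, hne⟩ := hadj
      rw [SimpleGraph.fromEdgeSet_adj] at hne
      push_neg at hne
      rw [SimpleGraph.pathGraph_adj] at hpg
      by_contra hy
      push_neg at hy
      -- then x = v and y = w
      have hxv : (x:ℕ) = (v:ℕ) := by omega
      have hyw : (y:ℕ) = (w:ℕ) := by omega
      have hx : x = v := Fin.ext hxv
      have hyw' : y = w := Fin.ext hyw
      subst hx hyw'
      have : x ≠ y := by
        intro hh
        rw [hh] at h
        omega
      exact this (hne rfl)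
  have := key v w p le_rfl
  omega

lemma pathGraph_isAcyclic (n : ℕ) : (pathGraph n).IsAcyclic := by
  rw [isAcyclic_iff_forall_adj_isBridge]
  intro v w hvw
  rcases (SimpleGraph.pathGraph_adj.mp hvw) with h | h
  · exact pathGraph_bridge_helper n v w h
  · rw [Sym2.eq_swap]
    exact pathGraph_bridge_helper n w v h

lemma pathGraph_isTree (n : ℕ) : (pathGraph (n+1)).IsTree :=
  ⟨pathGraph_connected n, pathGraph_isAcyclic (n+1)⟩

lemma iso_isTree {V W : Type*} {G : SimpleGraph V} {H : SimpleGraph W}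
    (e : G ≃g H) (h : G.IsTree) : H.IsTree := by
  constructor
  · exact (e.connected_iff).mp h.isConnected
  · intro v c hc
    exact h.IsAcyclic (c.map e.symm.toHom) (hc.map e.symm.toEquiv.injective)

/-- the position-to-key bijection -/
def posKey (m : ℕ) (hm : 0 < m) : Fin (2*m) ≃ Fin (2*m) where
  toFun p := ⟨if p.1 % 2 = 0 then p.1 / 2 else m + p.1 / 2, by
    have := p.2; split_ifs <;> omega⟩
  invFun k := ⟨if k.1 < m then 2 * k.1 else 2 * (k.1 - m) + 1, by
    have := k.2; split_ifs <;> omega⟩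
  left_inv p := by
    apply Fin.ext
    simp only
    have := p.2
    split_ifs <;> omega
  right_inv k := by
    apply Fin.ext
    simp only
    have := k.2
    split_ifs <;> omega


lemma pathGraph_isTree' (n : ℕ) (hn : 0 < n) : (pathGraph n).IsTree := by
  obtain ⟨k, rfl⟩ : ∃ k, n = k+1 := ⟨n-1, by omega⟩
  exact pathGraph_isTree k

theorem positive_part {m : ℕ} (hm : 0 < m) :
    ∃ Hp : SimpleGraph (Fin (2 * m)), Hp.IsTree ∧
      (∀ v, (Hp.neighborSet v).ncard ≤ 3) ∧
      (∑ i : Fin m, (Hp.dist ⟨i.1, fin_lt1 i⟩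
          ⟨m + i.1, fin_lt2 i⟩ : ℝ)) +
        (∑ i : Fin (m - 1), (Hp.dist ⟨m + i.1, fin_lt3 i⟩
          ⟨i.1 + 1, fin_lt4 i⟩ : ℝ)) = 2 * m - 1 := by
  classical
  set σ := posKey m hm with hσ
  set P := pathGraph (2*m) with hP
  refine ⟨P.map σ.toEmbedding, ?_, ?_, ?_⟩
  · exact iso_isTree (SimpleGraph.Iso.map σ P) (pathGraph_isTree' (2*m) (by omega))
  · intro v
    have hsub : (P.map σ.toEmbedding).neighborSet v ⊆
        {σ ⟨min ((σ.symm v).1 + 1) (2*m-1), by omega⟩, σ ⟨(σ.symm v).1 - 1, by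
          have := (σ.symm v).2; omega⟩} := by
      intro b hb
      rw [SimpleGraph.mem_neighborSet, SimpleGraph.map_adj] at hb
      obtain ⟨u, u', hadj, hu, hu'⟩ := hb
      have hu2 : σ u = v := hu
      have hup : u = σ.symm v := (Equiv.eq_symm_apply σ).mpr hu2
      rw [hP, SimpleGraph.pathGraph_adj] at hadj
      rcases hadj with h | h
      · left
        rw [← hu']
        show σ u' = _
        congr 1
        apply Fin.ext
        have h2 := u'.2
        have := congrArg Fin.val hup
        simp only [Fin.val_mk]
        omega
      · right
        rw [← hu']
        show σ u' = _
        congr 1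
        apply Fin.ext
        have := congrArg Fin.val hup
        simp only [Fin.val_mk]
        omega
    calc ((P.map σ.toEmbedding).neighborSet v).ncard
        ≤ _ := Set.ncard_le_ncard hsub (Set.toFinite _)
      _ ≤ 2 := by
          apply le_trans (Set.ncard_insert_le _ _)
          simp
      _ ≤ 3 := by omega
  · have A1 : ∀ i : Fin m, (P.map σ.toEmbedding).Adj
        ⟨i.1, by have := i.2; omega⟩ ⟨m + i.1, by have := i.2; omega⟩ := by
      intro i
      rw [SimpleGraph.map_adj]
      refine ⟨⟨2*i.1, by have := i.2; omega⟩, ⟨2*i.1+1, by have := i.2; omega⟩, ?_, ?_, ?_⟩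
      · rw [hP, SimpleGraph.pathGraph_adj]
        left; rfl
      · show σ _ = _
        apply Fin.ext
        show (if (2*i.1) % 2 = 0 then (2*i.1)/2 else m + (2*i.1)/2) = i.1
        rw [if_pos (by omega)]
        omega
      · show σ _ = _
        apply Fin.ext
        show (if (2*i.1+1) % 2 = 0 then (2*i.1+1)/2 else m + (2*i.1+1)/2) = m + i.1
        rw [if_neg (by omega)]
        omega
    have A2 : ∀ i : Fin (m-1), (P.map σ.toEmbedding).Adj
        ⟨m + i.1, by have := i.2; omega⟩ ⟨i.1 + 1, by have := i.2; omega⟩ := by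
      intro i
      rw [SimpleGraph.map_adj]
      refine ⟨⟨2*i.1+1, by have := i.2; omega⟩, ⟨2*i.1+2, by have := i.2; omega⟩, ?_, ?_, ?_⟩
      · rw [hP, SimpleGraph.pathGraph_adj]
        left; rfl
      · show σ _ = _
        apply Fin.ext
        show (if (2*i.1+1) % 2 = 0 then (2*i.1+1)/2 else m + (2*i.1+1)/2) = m + i.1
        rw [if_neg (by omega)]
        omega
      · show σ _ = _
        apply Fin.ext
        show (if (2*i.1+2) % 2 = 0 then (2*i.1+2)/2 else m + (2*i.1+2)/2) = i.1 + 1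
        rw [if_pos (by omega)]
        omega
    have hs1 : (∑ i : Fin m, ((P.map σ.toEmbedding).dist ⟨i.1, by have := i.2; omega⟩
        ⟨m + i.1, by have := i.2; omega⟩ : ℝ)) = m := by
      have : ∀ i : Fin m, ((P.map σ.toEmbedding).dist ⟨i.1, by have := i.2; omega⟩
          ⟨m + i.1, by have := i.2; omega⟩ : ℝ) = 1 := by
        intro i
        have := SimpleGraph.dist_eq_one_iff_adj.mpr (A1 i)
        rw [this]
        norm_num
      rw [Finset.sum_congr rfl (fun i _ => this i)]
      simp
    have hs2 : (∑ i : Fin (m-1), ((P.map σ.toEmbedding).dist ⟨m + i.1, by have := i.2; omega⟩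
        ⟨i.1 + 1, by have := i.2; omega⟩ : ℝ)) = (m-1 : ℕ) := by
      have : ∀ i : Fin (m-1), ((P.map σ.toEmbedding).dist ⟨m + i.1, by have := i.2; omega⟩
          ⟨i.1 + 1, by have := i.2; omega⟩ : ℝ) = 1 := by
        intro i
        have := SimpleGraph.dist_eq_one_iff_adj.mpr (A2 i)
        rw [this]
        norm_num
      rw [Finset.sum_congr rfl (fun i _ => this i)]
      simp
    rw [hs1, hs2]
    have h1 : ((m-1 : ℕ) : ℝ) = (m : ℝ) - 1 := by
      push_cast [Nat.cast_sub hm]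
      ring
    rw [h1]
    push_cast
    ring


end BSTAux

open BSTAux in
theorem stmt_19 :
    ∃ c : ℝ, 0 < c ∧ ∃ N : ℕ, ∀ m : ℕ, N ≤ m →
      ((∀ T : SimpleGraph (Fin (2 * m)), T.IsTree →
        (∀ v, (T.neighborSet v).ncard ≤ 3) →
        ∀ root : Fin (2 * m), (T.neighborSet root).ncard ≤ 2 →
        (∀ v : Fin (2 * m), ∃ a b : ℕ, ∀ w : Fin (2 * m),
          (T.dist root w = T.dist root v + T.dist v w) ↔
            (a ≤ (w : ℕ) ∧ (w : ℕ) ≤ b)) →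
        c * (2 * m) * Real.log (2 * m) ≤
          (∑ i : Fin m, (T.dist ⟨i.1, by have := i.2; omega⟩
              ⟨m + i.1, by have := i.2; omega⟩ : ℝ)) +
            ∑ i : Fin (m - 1), (T.dist ⟨m + i.1, by have := i.2; omega⟩
              ⟨i.1 + 1, by have := i.2; omega⟩ : ℝ)) ∧
      ∃ Hp : SimpleGraph (Fin (2 * m)), Hp.IsTree ∧
        (∀ v, (Hp.neighborSet v).ncard ≤ 3) ∧
        (∑ i : Fin m, (Hp.dist ⟨i.1, by have := i.2; omega⟩
            ⟨m + i.1, by have := i.2; omega⟩ : ℝ)) +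
          (∑ i : Fin (m - 1), (Hp.dist ⟨m + i.1, by have := i.2; omega⟩
            ⟨i.1 + 1, by have := i.2; omega⟩ : ℝ)) = 2 * m - 1) := by
  refine ⟨1/100, by norm_num, 1024, ?_⟩
  intro m hm
  constructor
  · intro T ht hdeg root hroot hI
    have hlb := BSTAux.lower_bound hm T ht hdeg root hI
    rw [Nat.cast_sum] at hlb
    have h2 : (0:ℝ) ≤ ∑ i : Fin (m-1), (T.dist ⟨m + i.1, by have := i.2; omega⟩
        ⟨i.1 + 1, by have := i.2; omega⟩ : ℝ) :=
      Finset.sum_nonneg (fun i _ => by positivity)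
    linarith
  · exact BSTAux.positive_part (by omega)
end
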